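/- arXiv:2302.09695 — 5 statements merged into one kernel-verified Lean document; each statement's English description precedes it below -/
import Mathlib

section
/- The polynomial m_1 = -5*p_3^2 + 6*p_6 - 180*s_6 in Q[x_1,...,x_6] is invariant under the reflection R_2, i.e. m_1 is unchanged under the substitution x_j ↦ x_j - (1/3)(x_1 + x_2 + x_3 + x_4 + x_5 + x_6) applied simultaneously for j = 1,...,6. -/
open MvPolynomial

/-- power sums `p j = x₁^j + ⋯ + x₆^j` in `ℚ[x₁,…,x₆]`. -/
noncomputable def p (j : ℕ) : MvPolynomial (Fin 6) ℚ := ∑ i, X i ^ j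

/-- `s₆ = x₁ x₂ x₃ x₄ x₅ x₆`. -/
noncomputable def s6 : MvPolynomial (Fin 6) ℚ := ∏ i, X i

/-- the reflection `R₂ : x_j ↦ x_j - (1/3) ∑ₖ x_k`, as a substitution homomorphism. -/
noncomputable def R2 : MvPolynomial (Fin 6) ℚ →ₐ[ℚ] MvPolynomial (Fin 6) ℚ :=
  bind₁ fun j : Fin 6 => X j - C (1/3 : ℚ) * ∑ k, X k

/-- `m₁ = -5 p₃² + 6 p₆ - 180 s₆`. -/
noncomputable def m1 : MvPolynomial (Fin 6) ℚ := -5 * p 3 ^ 2 + 6 * p 6 - 180 * s6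

lemma three_C_third : (3 : MvPolynomial (Fin 6) ℚ) * C (1/3 : ℚ) = 1 := by
  have : (3 : MvPolynomial (Fin 6) ℚ) = C (3 : ℚ) := by
    simp [map_ofNat]
  rw [this, ← C_mul]
  norm_num

set_option maxHeartbeats 4000000 in
theorem m1_invariant_under_R2 : R2 m1 = m1 := by
  set T : MvPolynomial (Fin 6) ℚ →ₐ[ℚ] MvPolynomial (Fin 6) ℚ :=
    bind₁ (fun j : Fin 6 => (3 : MvPolynomial (Fin 6) ℚ) * X j) with hT
  set Tinv : MvPolynomial (Fin 6) ℚ →ₐ[ℚ] MvPolynomial (Fin 6) ℚ :=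
    bind₁ (fun j : Fin 6 => C (1/3 : ℚ) * X j) with hTinv
  have key : ∀ x : MvPolynomial (Fin 6) ℚ, Tinv (T x) = x := by
    intro x
    rw [hT, hTinv, bind₁_bind₁]
    have : (fun i : Fin 6 => bind₁ (fun j : Fin 6 => C (1/3 : ℚ) * X j)
        ((3 : MvPolynomial (Fin 6) ℚ) * X i)) = X := by
      funext i
      rw [map_mul, bind₁_X_right, map_ofNat, ← mul_assoc]
      rw [three_C_third, one_mul]
    rw [this, bind₁_X_left, AlgHom.id_apply]
  have hTR : T (R2 m1) = bind₁ (fun j : Fin 6 =>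
      (3 : MvPolynomial (Fin 6) ℚ) * X j - ∑ k, X k) m1 := by
    rw [R2, hT, bind₁_bind₁]
    congr 2
    funext i
    rw [map_sub, map_mul, bind₁_X_right, algHom_C, map_sum]
    simp only [bind₁_X_right]
    rw [← Finset.mul_sum, ← mul_assoc, algebraMap_eq,
      mul_comm (C (1/3 : ℚ)) (3 : MvPolynomial (Fin 6) ℚ), three_C_third, one_mul]
  have h2 : bind₁ (fun j : Fin 6 =>
      (3 : MvPolynomial (Fin 6) ℚ) * X j - ∑ k, X k) m1 = T m1 := by
    rw [hT]
    simp only [m1, p, s6, map_add, map_sub, map_mul, map_pow, map_neg, map_sum, map_prod,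
      map_ofNat, bind₁_X_right, Fin.sum_univ_six, Fin.prod_univ_six]
    ring
  calc R2 m1 = Tinv (T (R2 m1)) := (key _).symm
    _ = Tinv (T m1) := by rw [hTR, h2]
    _ = m1 := key _
end

section
/- In Q[x_1,...,x_6], applying the substitution R_2: x_j ↦ x_j - (1/3)∑_{k=1}^6 x_k to the power sum p_6 = ∑_{i=1}^6 x_i^6 yields ∑_{i=1}^6 (x_i - (1/3)∑_{k=1}^6 x_k)^6 = (1/9720)(-79 q_1^6 + 585 q_1^4 q_2 + 3645 q_1^2 q_2^2 - 1215 q_2^3 - 3960 q_1^3 q_3 - 9720 q_1 q_2 q_3 + 3240 q_3^2 + 8910 q_1^2 q_4 + 7290 q_2 q_4 - 7776 q_1 q_5 - 58320 s_6). -/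
open MvPolynomial

/-- power sums `q j = x₁^j + ⋯ + x₆^j` in `ℚ[x₁,…,x₆]`. -/
noncomputable def q (j : ℕ) : MvPolynomial (Fin 6) ℚ := ∑ i, X i ^ j

set_option maxHeartbeats 4000000 in
theorem p6_after_R2 :
    ∑ i : Fin 6, (X i - C (1/3 : ℚ) * ∑ k, X k) ^ 6
      = C (1/9720 : ℚ) *
        (-79 * q 1 ^ 6 + 585 * q 1 ^ 4 * q 2 + 3645 * q 1 ^ 2 * q 2 ^ 2 - 1215 * q 2 ^ 3 -
          3960 * q 1 ^ 3 * q 3 - 9720 * q 1 * q 2 * q 3 + 3240 * q 3 ^ 2 +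
          8910 * q 1 ^ 2 * q 4 + 7290 * q 2 * q 4 - 7776 * q 1 * q 5 - 58320 * s6) := by
  have c9720 : (C (9720:ℚ) : MvPolynomial (Fin 6) ℚ) = 9720 := map_ofNat C 9720
  have cbig : (C (7085880:ℚ) : MvPolynomial (Fin 6) ℚ) = 7085880 := map_ofNat C 7085880
  have h3 : (3 : MvPolynomial (Fin 6) ℚ) * C (1/3:ℚ) = 1 := by
    rw [← map_ofNat (C : ℚ →+* MvPolynomial (Fin 6) ℚ) 3, ← C_mul]; norm_num
  have h9 : (9720 : MvPolynomial (Fin 6) ℚ) * C (1/9720:ℚ) = 1 := by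
    rw [← c9720, ← C_mul]; norm_num
  have hne : (7085880 : MvPolynomial (Fin 6) ℚ) ≠ 0 := by
    rw [← cbig, Ne, C_eq_zero]; norm_num
  apply mul_left_cancel₀ hne
  have key : ∀ i : Fin 6,
      (3 : MvPolynomial (Fin 6) ℚ) * (X i - C (1/3:ℚ) * ∑ k, X k)
        = 3 * X i - ∑ k, X k := by
    intro i
    have h : (3 : MvPolynomial (Fin 6) ℚ) * (X i - C (1/3:ℚ) * ∑ k, X k)
        = 3 * X i - (3 * C (1/3:ℚ)) * ∑ k, X k := by ring
    rw [h, h3, one_mul]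
  have hL : (7085880 : MvPolynomial (Fin 6) ℚ)
        * ∑ i : Fin 6, (X i - C (1/3 : ℚ) * ∑ k, X k) ^ 6
      = 9720 * ∑ i : Fin 6, (3 * X i - ∑ k, X k) ^ 6 := by
    have step : ∀ i : Fin 6,
        (7085880 : MvPolynomial (Fin 6) ℚ) * (X i - C (1/3 : ℚ) * ∑ k, X k) ^ 6
          = 9720 * (3 * X i - ∑ k, X k) ^ 6 := by
      intro i; rw [← key i]; ring
    calc (7085880 : MvPolynomial (Fin 6) ℚ)
          * ∑ i : Fin 6, (X i - C (1/3 : ℚ) * ∑ k, X k) ^ 6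
        = ∑ i : Fin 6, 7085880 * (X i - C (1/3 : ℚ) * ∑ k, X k) ^ 6 :=
          Finset.mul_sum _ _ _
      _ = ∑ i : Fin 6, 9720 * (3 * X i - ∑ k, X k) ^ 6 :=
          Finset.sum_congr rfl fun i _ => step i
      _ = 9720 * ∑ i : Fin 6, (3 * X i - ∑ k, X k) ^ 6 :=
          (Finset.mul_sum _ _ _).symm
  rw [hL]
  have hR : ∀ B : MvPolynomial (Fin 6) ℚ,
      (7085880 : MvPolynomial (Fin 6) ℚ) * (C (1/9720:ℚ) * B)
        = 729 * B := by
    intro B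
    have h : (7085880 : MvPolynomial (Fin 6) ℚ) * (C (1/9720:ℚ) * B)
        = 729 * ((9720 * C (1/9720:ℚ)) * B) := by ring
    rw [h, h9, one_mul]
  rw [hR]
  simp only [q, s6, Fin.sum_univ_six, Fin.prod_univ_six]
  ring
end

section
/- In Q[x_1,...,x_6], applying the substitution R_2: x_j ↦ x_j - (1/3)∑_{k=1}^6 x_k to the product s_6 = x_1 x_2 x_3 x_4 x_5 x_6 yields ∏_{i=1}^6 (x_i - (1/3)∑_{k=1}^6 x_k) = (1/14580)(-13 q_1^6 + 180 q_1^4 q_2 - 405 q_1^2 q_2^2 - 450 q_1^3 q_3 + 810 q_1 q_2 q_3 + 810 q_1^2 q_4 - 972 q_1 q_5 + 14580 s_6). -/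
open MvPolynomial

set_option maxHeartbeats 4000000 in
theorem key_s6_R2 :
    (20 : MvPolynomial (Fin 6) ℚ) * ∏ i : Fin 6, (3 * X i - ∑ k, X k)
      = (-13 * q 1 ^ 6 + 180 * q 1 ^ 4 * q 2 - 405 * q 1 ^ 2 * q 2 ^ 2 -
          450 * q 1 ^ 3 * q 3 + 810 * q 1 * q 2 * q 3 + 810 * q 1 ^ 2 * q 4 -
          972 * q 1 * q 5 + 14580 * s6) := by
  simp only [q, s6, Fin.prod_univ_six, Fin.sum_univ_six]
  ring

theorem s6_after_R2 :
    ∏ i : Fin 6, (X i - C (1/3 : ℚ) * ∑ k, X k)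
      = C (1/14580 : ℚ) *
        (-13 * q 1 ^ 6 + 180 * q 1 ^ 4 * q 2 - 405 * q 1 ^ 2 * q 2 ^ 2 -
          450 * q 1 ^ 3 * q 3 + 810 * q 1 * q 2 * q 3 + 810 * q 1 ^ 2 * q 4 -
          972 * q 1 * q 5 + 14580 * s6) := by
  have h3 : ((3 : MvPolynomial (Fin 6) ℚ)) = C (3 : ℚ) := by
    simp [map_ofNat]
  have h13 : (C (1/3 : ℚ) : MvPolynomial (Fin 6) ℚ) * 3 = 1 := by
    rw [h3, ← C_mul]; norm_num
  have hfac : ∀ i : Fin 6,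
      X i - C (1/3 : ℚ) * ∑ k, X k
        = C (1/3 : ℚ) * (3 * X i - ∑ k, X k) := by
    intro i
    rw [mul_sub, ← mul_assoc, h13, one_mul]
  calc ∏ i : Fin 6, (X i - C (1/3 : ℚ) * ∑ k, X k)
      = ∏ i : Fin 6, (C (1/3 : ℚ) * (3 * X i - ∑ k, X k)) :=
        Finset.prod_congr rfl fun i _ => hfac i
    _ = C (1/3 : ℚ) ^ 6 * ∏ i : Fin 6, (3 * X i - ∑ k, X k) := by
        rw [Finset.prod_mul_distrib, Finset.prod_const, Finset.card_univ,
          Fintype.card_fin]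
    _ = C (1/14580 : ℚ) *
        (-13 * q 1 ^ 6 + 180 * q 1 ^ 4 * q 2 - 405 * q 1 ^ 2 * q 2 ^ 2 -
          450 * q 1 ^ 3 * q 3 + 810 * q 1 * q 2 * q 3 + 810 * q 1 ^ 2 * q 4 -
          972 * q 1 * q 5 + 14580 * s6) := by
        rw [← key_s6_R2, ← mul_assoc]
        congr 1
        rw [← C_pow, show ((20 : MvPolynomial (Fin 6) ℚ)) = C (20 : ℚ) by
          simp [map_ofNat], ← C_mul]
        norm_num
end

section
/- In Q[x_1,x_2,x_3,x_4] the identity r_15 = (1/6)(r_3^5 - 5 r_3^3 r_6 + 5 r_3^2 r_9 + 5 r_6 r_9 - 30 r_3 r_4^3) holds; equivalently, with p_15 = ∑_{i=1}^6 x_i^15 in six variables, the restriction p_15|_{x_5 = x_6 = 1} equals (1/6)(12 + r_3^5 - 5 r_3^3 r_6 + 5 r_3^2 r_9 + 5 r_6 r_9 - 30 r_3 r_4^3). -/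
open MvPolynomial

/-- power sums `r j = x₁^j + x₂^j + x₃^j + x₄^j` in `ℚ[x₁,x₂,x₃,x₄]`. -/
noncomputable def r (j : ℕ) : MvPolynomial (Fin 4) ℚ := ∑ i, X i ^ j

/-- `r₄ = x₁ x₂ x₃ x₄`. -/
noncomputable def r4 : MvPolynomial (Fin 4) ℚ := ∏ i, X i

theorem r15_identity :
    r 15 = C (1/6 : ℚ) *
      (r 3 ^ 5 - 5 * r 3 ^ 3 * r 6 + 5 * r 3 ^ 2 * r 9 + 5 * r 6 * r 9 - 30 * r 3 * r4 ^ 3) := by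
  have h6 : (C (1/6 : ℚ) : MvPolynomial (Fin 4) ℚ) * 6 = 1 := by
    rw [show ((6 : MvPolynomial (Fin 4) ℚ)) = C (6 : ℚ) from (map_ofNat C 6).symm, ← C_mul]
    norm_num
  simp only [r, r4, Fin.sum_univ_four, Fin.prod_univ_four]
  linear_combination (-(X 0 ^ 15 + X 1 ^ 15 + X 2 ^ 15 + X 3 ^ 15) : MvPolynomial (Fin 4) ℚ) * h6
end

section
/- For every tuple a = (a_1,...,a_6) ∈ (Z/3Z)^6 with a_1 + a_2 + a_3 + a_4 + a_5 + a_6 = 0, there exist c ∈ Z/3Z and a permutation σ of {1,...,6} such that the tuple (a_{σ(1)} + c, ..., a_{σ(6)} + c) equals one of the four tuples (0,0,0,0,0,0), (0,0,0,0,1,2), (0,0,0,1,1,1), (0,0,1,1,2,2). -/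
set_option maxRecDepth 10000
set_option maxHeartbeats 1000000

lemma exists_perm_comp {α : Type*} [DecidableEq α] :
    ∀ {n : ℕ} (f g : Fin n → α), (List.ofFn f).Perm (List.ofFn g) →
      ∃ σ : Equiv.Perm (Fin n), f ∘ σ = g := by
  intro n
  induction n with
  | zero =>
    intro f g _
    exact ⟨1, funext fun i => i.elim0⟩
  | succ n ih =>
    intro f g h
    have hg0 : g 0 ∈ List.ofFn f := h.symm.subset (by
      rw [List.mem_ofFn]; exact ⟨0, rfl⟩)
    rw [List.mem_ofFn] at hg0
    obtain ⟨k, hk⟩ := hg0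
    set τ : Equiv.Perm (Fin (n + 1)) := Equiv.swap 0 k with hτ
    have hperm : (List.ofFn (f ∘ τ)).Perm (List.ofFn g) :=
      (Equiv.Perm.ofFn_comp_perm τ f).trans h
    have h0 : (f ∘ τ) 0 = g 0 := by simp [hτ, Equiv.swap_apply_left, hk]
    rw [List.ofFn_succ, List.ofFn_succ, h0] at hperm
    have htail : (List.ofFn (fun i : Fin n => (f ∘ τ) i.succ)).Perm
        (List.ofFn (fun i : Fin n => g i.succ)) := (List.perm_cons _).mp hperm
    obtain ⟨σ', hσ'⟩ := ih _ _ htail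
    set σ₀ : Equiv.Perm (Fin (n + 1)) := Equiv.Perm.decomposeFin.symm (0, σ') with hσ₀
    refine ⟨σ₀.trans τ, funext fun i => ?_⟩
    induction i using Fin.cases with
    | zero =>
      simpa [hσ₀, Equiv.Perm.decomposeFin_symm_apply_zero] using h0
    | succ j =>
      have h1 : σ₀ j.succ = (σ' j).succ := by
        simp [hσ₀, Equiv.Perm.decomposeFin_symm_apply_succ, Equiv.swap_apply_of_ne_of_ne]
      have := congrFun hσ' j
      simpa [h1] using this

lemma key : ∀ a : Fin 6 → ZMod 3, ∑ i, a i = 0 →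
    ∃ c : ZMod 3,
      (List.ofFn (fun i => a i + c)).Perm (List.ofFn ![(0 : ZMod 3), 0, 0, 0, 0, 0]) ∨
      (List.ofFn (fun i => a i + c)).Perm (List.ofFn ![(0 : ZMod 3), 0, 0, 0, 1, 2]) ∨
      (List.ofFn (fun i => a i + c)).Perm (List.ofFn ![(0 : ZMod 3), 0, 0, 1, 1, 1]) ∨
      (List.ofFn (fun i => a i + c)).Perm (List.ofFn ![(0 : ZMod 3), 0, 1, 1, 2, 2]) := by
  decide

theorem classify_exponent_tuples (a : Fin 6 → ZMod 3) (h : ∑ i, a i = 0) :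
    ∃ (c : ZMod 3) (σ : Equiv.Perm (Fin 6)),
      (fun i => a (σ i) + c) = ![(0 : ZMod 3), 0, 0, 0, 0, 0] ∨
      (fun i => a (σ i) + c) = ![(0 : ZMod 3), 0, 0, 0, 1, 2] ∨
      (fun i => a (σ i) + c) = ![(0 : ZMod 3), 0, 0, 1, 1, 1] ∨
      (fun i => a (σ i) + c) = ![(0 : ZMod 3), 0, 1, 1, 2, 2] := by
  obtain ⟨c, hc⟩ := key a h
  rcases hc with hp | hp | hp | hp
  · obtain ⟨σ, hσ⟩ := exists_perm_comp _ _ hp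
    exact ⟨c, σ, Or.inl hσ⟩
  · obtain ⟨σ, hσ⟩ := exists_perm_comp _ _ hp
    exact ⟨c, σ, Or.inr (Or.inl hσ)⟩
  · obtain ⟨σ, hσ⟩ := exists_perm_comp _ _ hp
    exact ⟨c, σ, Or.inr (Or.inr (Or.inl hσ))⟩
  · obtain ⟨σ, hσ⟩ := exists_perm_comp _ _ hp
    exact ⟨c, σ, Or.inr (Or.inr (Or.inr hσ))⟩
end
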